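/- arXiv:2408.07890 — 6 statements merged into one kernel-verified Lean document; each statement's English description precedes it below -/
import Mathlib

section
/- Let X, Y be distinct node sets and S a node set in a DAG G such that every d-connecting path between X and Y given S exists, and let p be a shortest d-connecting path between X and Y given S. Then p contains no shielded collider: there do not exist consecutive nodes A, B, C on p with A→B←C in G and A, C adjacent in G. -/
/-! ## Basic notions for directed graphs (DAGs) given by an edge relation `E`. -/

/-- A directed graph (edge relation `E`) is acyclic: no directed cycles. -/
def Acyclic {V : Type*} (E : V → V → Prop) : Prop := ∀ x, ¬ Relation.TransGen E x x

/-- Two nodes are adjacent if there is an edge between them in either direction. -/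
def adjD {V : Type*} (E : V → V → Prop) (a b : V) : Prop := E a b ∨ E b a

/-- `p` is a path (in the skeleton) from `X` to `Y`: consecutive nodes are adjacent and
nodes are pairwise distinct. -/
def IsPath {V : Type*} (E : V → V → Prop) (p : List V) (X Y : V) : Prop :=
  p.head? = some X ∧ p.getLast? = some Y ∧ p.Chain' (adjD E) ∧ p.Nodup

/-- A path is d-connecting (open) given `S` if every collider on it is an ancestor
of some node of `S` and no non-collider on it lies in `S`. -/
def dConnecting {V : Type*} (E : V → V → Prop) (S : Set V) (p : List V) : Prop :=
  ∀ (i : ℕ) a b c, p[i]? = some a → p[i+1]? = some b → p[i+2]? = some c →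
    ((E a b ∧ E c b) → ∃ s ∈ S, Relation.ReflTransGen E b s) ∧
    (¬ (E a b ∧ E c b) → b ∉ S)

/-- `X` and `Y` are d-separated by `S` if every path between them is blocked by `S`. -/
def dSeparated {V : Type*} (E : V → V → Prop) (S : Set V) (X Y : V) : Prop :=
  ∀ p : List V, IsPath E p X Y → ¬ dConnecting E S p

/-- A v-structure `a → b ← c` with `a`, `c` non-adjacent. -/
def vStructD {V : Type*} (E : V → V → Prop) (a b c : V) : Prop :=
  E a b ∧ E c b ∧ a ≠ c ∧ ¬ adjD E a c

/-! ## Partially directed graphs (PDAGs / MPDAGs). -/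

/-- A partially directed graph: directed edges `dir` and undirected edges `undir`. -/
structure PDAG (V : Type*) where
  dir : V → V → Prop
  undir : V → V → Prop
  undir_symm : ∀ a b, undir a b → undir b a
  dir_asymm : ∀ a b, dir a b → ¬ dir b a
  disj : ∀ a b, undir a b → ¬ dir a b

namespace PDAG

variable {V : Type*} (G : PDAG V)

/-- Adjacency in a partially directed graph. -/
def adj (a b : V) : Prop := G.dir a b ∨ G.dir b a ∨ G.undir a b

/-- A v-structure `a → b ← c` in a PDAG, with `a, c` non-adjacent. -/
def vStruct (a b c : V) : Prop := G.dir a b ∧ G.dir c b ∧ a ≠ c ∧ ¬ G.adj a c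

/-- Parents of `X`. -/
def pa (X : V) : Set V := {z | G.dir z X}

/-- Children of `X`. -/
def ch (X : V) : Set V := {z | G.dir X z}

/-- Siblings (undirected neighbours) of `X`. -/
def sib (X : V) : Set V := {z | G.undir X z}

/-- A DAG `E` is represented by the (M)PDAG `G` (i.e. `E ∈ [G]`): it is acyclic,
has the same skeleton and the same v-structures as `G`, and preserves every
directed edge of `G`. -/
def Represents (E : V → V → Prop) : Prop :=
  Acyclic E ∧ (∀ a b, adjD E a b ↔ G.adj a b) ∧
  (∀ a b, G.dir a b → E a b) ∧
  (∀ a b c, vStructD E a b c ↔ G.vStruct a b c)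

/-- `G` is an MPDAG: its represented class is non-empty, an edge is directed in
`G` iff it has that orientation in all DAGs of the class, and every undirected
edge takes both orientations across the class. -/
def IsMPDAG : Prop :=
  (∃ E, G.Represents E) ∧
  (∀ a b, G.dir a b ↔ (G.adj a b ∧ ∀ E, G.Represents E → E a b)) ∧
  (∀ a b, G.undir a b → ∃ E, G.Represents E ∧ E a b)

/-- Induced sub-PDAG on a vertex set `W`. -/
def induce (W : Set V) : PDAG V where
  dir a b := a ∈ W ∧ b ∈ W ∧ G.dir a b
  undir a b := a ∈ W ∧ b ∈ W ∧ G.undir a b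
  undir_symm a b h := ⟨h.2.1, h.1, G.undir_symm a b h.2.2⟩
  dir_asymm a b h hb := G.dir_asymm a b h.2.2 hb.2.2
  disj a b h hd := G.disj a b h.2.2 hd.2.2

end PDAG

/-- A path in a PDAG: consecutive nodes adjacent, pairwise distinct nodes. -/
def IsPDAGPath {V : Type*} (G : PDAG V) (p : List V) (X Y : V) : Prop :=
  p.head? = some X ∧ p.getLast? = some Y ∧ p.Chain' G.adj ∧ p.Nodup

/-- A path is b-possibly causal: no edge `V_j → V_i` in `G` for `i < j` along it. -/
def bPossiblyCausal {V : Type*} (G : PDAG V) (p : List V) : Prop :=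
  ∀ (i j : ℕ) a b, i < j → p[i]? = some a → p[j]? = some b → ¬ G.dir b a

/-- A path is chordless: non-consecutive nodes are non-adjacent. -/
def Chordless {V : Type*} (G : PDAG V) (p : List V) : Prop :=
  ∀ (i j : ℕ) a b, i + 1 < j → p[i]? = some a → p[j]? = some b → ¬ G.adj a b

/-- Critical set of `X` with respect to `Y` in `G`: the adjacent vertices of `X`
lying on some chordless b-possibly causal path from `X` to `Y`. -/
def criticalSet {V : Type*} (G : PDAG V) (X Y : V) : Set V :=
  {c | ∃ p : List V, IsPDAGPath G p X Y ∧ bPossiblyCausal G p ∧ Chordless G p ∧ p[1]? = some c}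

/-- A DAG extension of `G`: acyclic, same skeleton, all directed edges of `G`
kept, and no v-structures beyond those of `G`. -/
def ExtendsNoNewV {V : Type*} (G : PDAG V) (E : V → V → Prop) : Prop :=
  Acyclic E ∧ (∀ a b, adjD E a b ↔ G.adj a b) ∧
  (∀ a b, G.dir a b → E a b) ∧
  (∀ a b c, vStructD E a b c → G.vStruct a b c)

/-- An acyclic orientation of `G` extending its directed edges. -/
def ExtendsDir {V : Type*} (G : PDAG V) (E : V → V → Prop) : Prop :=
  Acyclic E ∧ (∀ a b, adjD E a b ↔ G.adj a b) ∧ (∀ a b, G.dir a b → E a b)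

/-- `W` is (the vertex set of) a B-component of `G`: an equivalence class of the
undirected-connectivity relation. -/
def IsBComponent {V : Type*} (G : PDAG V) (W : Set V) : Prop :=
  ∃ a, W = {b | Relation.ReflTransGen G.undir a b}

/-- Every non-endpoint node of `p` is of definite status in `M`: a definite
collider or a definite non-collider. -/
def DefiniteStatus {V : Type*} (M : PDAG V) (p : List V) : Prop :=
  ∀ (i : ℕ) a b c, p[i]? = some a → p[i+1]? = some b → p[i+2]? = some c →
    (M.dir a b ∧ M.dir c b) ∨ M.dir b a ∨ M.dir b c ∨
    (M.undir a b ∧ M.undir b c ∧ ¬ M.adj a c)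

/-! Removing the middle node `b` of a shielded collider `a → b ← c` from `p` leaves a path, since
`a` and `c` are adjacent. It is still d-connecting: `a` was a non-collider on `p` (because `a → b`),
so `a ∉ S`, and should `a` become a collider it is an ancestor of `b`, hence of `S`; likewise for
`c`. The shorter path contradicts the minimality of `p`. -/

namespace List

variable {α : Type*}

theorem head?_eraseIdx_succ (l : List α) (i : ℕ) : (l.eraseIdx (i + 1)).head? = l.head? := by
  simp only [head?_eq_getElem?, getElem?_eraseIdx, Nat.succ_pos, if_true]

theorem getLast?_eraseIdx_of_succ_lt {l : List α} {i : ℕ} (hi : i + 1 < l.length) :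
    (l.eraseIdx i).getLast? = l.getLast? := by
  rw [getLast?_eq_getElem?, getLast?_eq_getElem?, length_eraseIdx, if_pos (by omega),
    getElem?_eraseIdx, if_neg (by omega), Nat.sub_add_cancel (by omega)]

theorem IsChain.eraseIdx_succ {R : α → α → Prop} {l : List α} {i : ℕ} {a c : α}
    (h : l.IsChain R) (ha : l[i]? = some a) (hc : l[i + 2]? = some c) (hac : R a c) :
    (l.eraseIdx (i + 1)).IsChain R := by
  induction l generalizing i with
  | nil => simp at ha
  | cons x l ih =>
    cases i with
    | zero =>
      match l, h, ha, hc with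
      | _ :: _ :: t, h, ha, hc =>
        simp only [getElem?_cons_zero, Option.some.injEq, getElem?_cons_succ] at ha hc
        subst ha hc
        exact isChain_cons_cons.mpr ⟨hac, h.tail.tail⟩
    | succ i =>
      simp only [getElem?_cons_succ] at ha hc
      rw [eraseIdx_cons_succ, List.isChain_cons, head?_eraseIdx_succ]
      exact ⟨h.rel_head?, ih h.tail ha hc⟩

end List

section DSeparation

variable {V : Type*} {E : V → V → Prop} {S : Set V}

def IsOpenTriple (E : V → V → Prop) (S : Set V) (a b c : V) : Prop :=
  ((E a b ∧ E c b) → ∃ s ∈ S, Relation.ReflTransGen E b s) ∧ (¬ (E a b ∧ E c b) → b ∉ S)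

theorem dConnecting_iff_isOpenTriple {p : List V} :
    dConnecting E S p ↔ ∀ (i : ℕ) a b c, p[i]? = some a → p[i + 1]? = some b →
      p[i + 2]? = some c → IsOpenTriple E S a b c :=
  Iff.rfl

theorem IsOpenTriple.symm {a b c : V} (h : IsOpenTriple E S a b c) : IsOpenTriple E S c b a := by
  simpa only [IsOpenTriple, and_comm (a := E a b)] using h

theorem IsOpenTriple.replace_right {x a b c : V} (h : IsOpenTriple E S x a b) (hab : E a b)
    (hba : ¬ E b a) (hb : ∃ s ∈ S, Relation.ReflTransGen E b s) : IsOpenTriple E S x a c := by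
  obtain ⟨s, hs, hbs⟩ := hb
  exact ⟨fun _ => ⟨s, hs, .head hab hbs⟩, fun _ => h.2 fun hcol => hba hcol.2⟩

theorem dConnecting.eraseIdx_succ {p : List V} {i : ℕ} {a b c : V} (hconn : dConnecting E S p)
    (ha : p[i]? = some a) (hb : p[i + 1]? = some b) (hc : p[i + 2]? = some c)
    (hab : E a b) (hcb : E c b) (hba : ¬ E b a) (hbc : ¬ E b c) :
    dConnecting E S (p.eraseIdx (i + 1)) := by
  rw [dConnecting_iff_isOpenTriple] at hconn ⊢
  have hbS := (hconn i a b c ha hb hc).1 ⟨hab, hcb⟩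
  intro j x y z hx hy hz
  simp only [List.getElem?_eraseIdx] at hx hy hz
  obtain hj | rfl | rfl | hj : j + 1 < i ∨ j + 1 = i ∨ j = i ∨ i < j := by omega
  · rw [if_pos (by omega)] at hx hy hz
    exact hconn j x y z hx hy hz
  · rw [if_pos (by omega)] at hx hy
    rw [if_neg (by omega)] at hz
    obtain rfl : y = a := Option.some_injective _ (hy.symm.trans ha)
    obtain rfl : z = c := Option.some_injective _ (hz.symm.trans hc)
    exact (hconn j x y b hx hy hb).replace_right hab hba hbS
  · rw [if_pos (by omega)] at hx
    rw [if_neg (by omega)] at hy hz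
    obtain rfl : x = a := Option.some_injective _ (hx.symm.trans ha)
    obtain rfl : y = c := Option.some_injective _ (hy.symm.trans hc)
    exact ((hconn (j + 1) b y z hb hy hz).symm.replace_right hcb hbc hbS).symm
  · rw [if_neg (by omega)] at hx hy hz
    exact hconn (j + 1) x y z hx hy hz

theorem IsPath.eraseIdx_succ {p : List V} {X Y a c : V} {i : ℕ} (hp : IsPath E p X Y)
    (ha : p[i]? = some a) (hc : p[i + 2]? = some c) (hac : adjD E a c) :
    IsPath E (p.eraseIdx (i + 1)) X Y := by
  obtain ⟨hhead, hlast, hchain, hnodup⟩ := hp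
  have hi : i + 2 < p.length := (List.getElem?_eq_some_iff.mp hc).1
  exact ⟨(p.head?_eraseIdx_succ i).trans hhead,
    (List.getLast?_eraseIdx_of_succ_lt (by omega)).trans hlast,
    hchain.eraseIdx_succ ha hc hac, hnodup.eraseIdx _⟩

end DSeparation

theorem stmt1_general {V : Type*} (E : V → V → Prop) (hdag : Acyclic E)
    (XS YS S : Set V)
    (p : List V) (X Y : V) (hX : X ∈ XS) (hY : Y ∈ YS)
    (hp : IsPath E p X Y) (hconn : dConnecting E S p)
    (hshort : ∀ (q : List V) (X' Y' : V), X' ∈ XS → Y' ∈ YS →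
      IsPath E q X' Y' → dConnecting E S q → p.length ≤ q.length) :
    ¬ ∃ (i : ℕ) (a b c : V), p[i]? = some a ∧ p[i+1]? = some b ∧ p[i+2]? = some c ∧
      E a b ∧ E c b ∧ adjD E a c := by
  rintro ⟨i, a, b, c, ha, hb, hc, hab, hcb, hac⟩
  have asymm {u v : V} (huv : E u v) : ¬ E v u := fun hvu => hdag u (.tail (.single huv) hvu)
  have hle := hshort _ X Y hX hY (hp.eraseIdx_succ ha hc hac)
    (hconn.eraseIdx_succ ha hb hc hab hcb (asymm hab) (asymm hcb))
  have hi : i + 1 < p.length := (List.getElem?_eq_some_iff.mp hb).1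
  rw [List.length_eraseIdx, if_pos hi] at hle
  omega

/-- a shortest d-connecting path between node sets `XS` and `YS` given `S`
contains no shielded collider. -/
theorem stmt1 {V : Type*} (E : V → V → Prop) (hdag : Acyclic E)
    (XS YS S : Set V)
    (hXY : Disjoint XS YS) (hXS : Disjoint XS S) (hYS : Disjoint YS S)
    (p : List V) (X Y : V) (hX : X ∈ XS) (hY : Y ∈ YS)
    (hp : IsPath E p X Y) (hconn : dConnecting E S p)
    (hshort : ∀ (q : List V) (X' Y' : V), X' ∈ XS → Y' ∈ YS →
      IsPath E q X' Y' → dConnecting E S q → p.length ≤ q.length) :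
    ¬ ∃ (i : ℕ) (a b c : V), p[i]? = some a ∧ p[i+1]? = some b ∧ p[i+2]? = some c ∧
      E a b ∧ E c b ∧ adjD E a c :=
  stmt1_general E hdag XS YS S p X Y hX hY hp hconn hshort
end

section
/- Two Markov equivalent DAGs have the same skeleton and the same v-structures. -/
/-! Two distinct non-adjacent vertices `a`, `b` of a DAG, with `b` not a descendant of `a`, are
d-separated by the parents of `a`: along an open path leaving `a`, the first edge cannot enter
`a` (its head would be a non-collider in the separating set), and no later edge can point
backwards (the collider so created would be an ancestor of a parent of `a`, closing a cycle), so
every vertex of the path is a descendant of `a`. Hence adjacency is readable from d-separation.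
For a v-structure `a → b ← c`, the triple `a, b, c` is a path; a set separating `a` from `c`
must avoid the collider `b` in the first DAG, and then forces `b` to be a collider in any Markov
equivalent DAG. -/

section DSeparation

variable {V : Type*} {E : V → V → Prop}

theorem Acyclic.ne_of_rel (hE : Acyclic E) {a b : V} (h : E a b) : a ≠ b := by
  rintro rfl
  exact hE a (.single h)

theorem Acyclic.ne_of_adjD (hE : Acyclic E) {a b : V} (h : adjD E a b) : a ≠ b :=
  h.elim hE.ne_of_rel fun h => (hE.ne_of_rel h).symm

theorem IsPath.reverse {p : List V} {X Y : V} (hp : IsPath E p X Y) :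
    IsPath E p.reverse Y X := by
  obtain ⟨hX, hY, hchain, hnodup⟩ := hp
  exact ⟨by rwa [List.head?_reverse], by rwa [List.getLast?_reverse],
    List.isChain_reverse.2 (hchain.imp fun _ _ h => h.symm), List.nodup_reverse.2 hnodup⟩

theorem dConnecting.reverse {S : Set V} {p : List V} (h : dConnecting E S p) :
    dConnecting E S p.reverse := by
  intro i x y z hx hy hz
  have hi : i + 2 < p.length := by simpa using (List.getElem?_eq_some_iff.1 hz).1
  rw [List.getElem?_reverse (by omega)] at hx hy hz
  have key := h (p.length - 3 - i) z y x
    (by rw [← hz]; congr 1; omega) (by rw [← hy]; congr 1; omega)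
    (by rw [← hx]; congr 1; omega)
  exact ⟨fun hcol => key.1 hcol.symm, fun hnc => key.2 fun hcol => hnc hcol.symm⟩

theorem dSeparated.symm {S : Set V} {X Y : V} (h : dSeparated E S X Y) : dSeparated E S Y X :=
  fun _ hp hconn => h _ hp.reverse hconn.reverse

theorem isPath_pair {a b : V} (hne : a ≠ b) (h : adjD E a b) : IsPath E [a, b] a b :=
  ⟨rfl, rfl, List.isChain_pair.2 h, by simpa using hne⟩

theorem dConnecting_pair (S : Set V) (a b : V) : dConnecting E S [a, b] := by
  intro i x y z _ _ hz
  simp at hz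

theorem not_dSeparated_of_adjD {a b : V} (hne : a ≠ b) (h : adjD E a b) (S : Set V) :
    ¬ dSeparated E S a b :=
  fun hS => hS _ (isPath_pair hne h) (dConnecting_pair S a b)

theorem isPath_triple {a b c : V} (hab : a ≠ b) (hbc : b ≠ c) (hac : a ≠ c)
    (h₁ : adjD E a b) (h₂ : adjD E b c) : IsPath E [a, b, c] a c :=
  ⟨rfl, rfl, List.isChain_cons_cons.2 ⟨h₁, List.isChain_pair.2 h₂⟩,
    by simp [hab, hbc, hac]⟩

theorem dConnecting_triple {S : Set V} {a b c : V}
    (hcollider : E a b ∧ E c b → ∃ s ∈ S, Relation.ReflTransGen E b s)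
    (hnoncollider : ¬ (E a b ∧ E c b) → b ∉ S) :
    dConnecting E S [a, b, c] := by
  rintro (_ | i) x y z hx hy hz
  · simp only [List.getElem?_cons_zero, List.getElem?_cons_succ, Option.some.injEq] at hx hy hz
    subst hx hy hz
    exact ⟨hcollider, hnoncollider⟩
  · simp at hz

theorem Acyclic.transGen_of_dConnecting_parents (hE : Acyclic E) {p : List V} {a b : V}
    (hp : IsPath E p a b) (hab : a ≠ b) (hba : ¬ E b a) (hconn : dConnecting E {z | E z a} p) :
    Relation.TransGen E a b := by
  obtain ⟨ha, hb, hchain, -⟩ := hp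
  have hlen : 2 ≤ p.length := by
    match p, ha, hb with
    | [_], ha, hb => simp_all
    | _ :: _ :: _, _, _ => simp
  rw [List.head?_eq_getElem?] at ha
  rw [List.getLast?_eq_getElem?] at hb
  have forward : ∀ i (hi : i + 1 < p.length),
      E p[i] p[i + 1] ∧ Relation.TransGen E a p[i + 1] := by
    intro i hi
    induction i with
    | zero =>
      simp only [Nat.zero_add] at hi ⊢
      have ha0 : p[0] = a := by simpa [List.getElem?_eq_getElem (by omega : 0 < p.length)] using ha
      have hstep : adjD E a p[1] := by simpa only [Nat.zero_add, ha0] using hchain.getElem 0 hi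
      rw [ha0]
      by_cases hfwd : E a p[1]
      · exact ⟨hfwd, .single hfwd⟩
      have hpa : E p[1] a := hstep.resolve_left hfwd
      rcases Nat.lt_or_ge 2 p.length with h3 | h2
      · exact absurd hpa <| (hconn 0 _ _ _ ha (List.getElem?_eq_getElem hi)
          (List.getElem?_eq_getElem h3)).2 fun hcol => hfwd hcol.1
      · have hp1 : p[1] = b := by
          simpa [show p.length - 1 = 1 by omega, List.getElem?_eq_getElem hi] using hb
        exact (hba (hp1 ▸ hpa)).elim
    | succ i ih =>
      obtain ⟨hprev, hanc⟩ := ih (by omega)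
      by_cases hfwd : E p[i + 1] p[i + 2]
      · exact ⟨hfwd, hanc.tail hfwd⟩
      have hback : E p[i + 2] p[i + 1] := (hchain.getElem (i + 1) hi).resolve_left hfwd
      obtain ⟨s, hsa, hdesc⟩ := (hconn i _ _ _ (List.getElem?_eq_getElem (by omega))
        (List.getElem?_eq_getElem (by omega)) (List.getElem?_eq_getElem hi)).1 ⟨hprev, hback⟩
      exact (hE a (hanc.trans_left hdesc |>.tail hsa)).elim
  have hlast : p[p.length - 2 + 1] = b := by
    simpa [show p.length - 2 + 1 = p.length - 1 by omega,
      List.getElem?_eq_getElem (by omega : p.length - 1 < p.length)] using hb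
  exact hlast ▸ (forward (p.length - 2) (by omega)).2

theorem Acyclic.dSeparated_parents (hE : Acyclic E) {a b : V} (hab : a ≠ b) (hba : ¬ E b a)
    (hdesc : ¬ Relation.TransGen E a b) : dSeparated E {z | E z a} a b :=
  fun _ hp hconn => hdesc (hE.transGen_of_dConnecting_parents hp hab hba hconn)

theorem Acyclic.exists_dSeparated (hE : Acyclic E) {a b : V} (hab : a ≠ b)
    (hadj : ¬ adjD E a b) : ∃ S, dSeparated E S a b := by
  by_cases hdesc : Relation.TransGen E a b
  · have hdesc' : ¬ Relation.TransGen E b a := fun h => hE a (hdesc.trans h)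
    exact ⟨_, (hE.dSeparated_parents hab.symm (fun h => hadj (.inl h)) hdesc').symm⟩
  · exact ⟨_, hE.dSeparated_parents hab (fun h => hadj (.inr h)) hdesc⟩

theorem dSeparated.notMem_of_collider {S : Set V} {a b c : V} (hS : dSeparated E S a c)
    (hab : a ≠ b) (hbc : b ≠ c) (hac : a ≠ c) (h₁ : E a b) (h₂ : E c b) : b ∉ S :=
  fun hb => hS _ (isPath_triple hab hbc hac (.inl h₁) (.inr h₂))
    (dConnecting_triple (fun _ => ⟨b, hb, .refl⟩) fun h => (h ⟨h₁, h₂⟩).elim)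

theorem dSeparated.collider_of_notMem {S : Set V} {a b c : V} (hS : dSeparated E S a c)
    (hab : a ≠ b) (hbc : b ≠ c) (hac : a ≠ c) (h₁ : adjD E a b) (h₂ : adjD E b c)
    (hb : b ∉ S) : E a b ∧ E c b := by
  by_contra hcol
  exact hS _ (isPath_triple hab hbc hac h₁ h₂) (dConnecting_triple (absurd · hcol) fun _ => hb)

end DSeparation

def MarkovEquivalent {V : Type*} (E₁ E₂ : V → V → Prop) : Prop :=
  ∀ (S : Set V) (X Y : V), dSeparated E₁ S X Y ↔ dSeparated E₂ S X Y

namespace MarkovEquivalent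

variable {V : Type*} {E₁ E₂ : V → V → Prop}

theorem symm (h : MarkovEquivalent E₁ E₂) : MarkovEquivalent E₂ E₁ :=
  fun S X Y => (h S X Y).symm

theorem adjD_of_adjD (h : MarkovEquivalent E₁ E₂) (h₁ : Acyclic E₁) (h₂ : Acyclic E₂)
    {a b : V} (hadj : adjD E₁ a b) : adjD E₂ a b := by
  by_contra hadj₂
  have hab := h₁.ne_of_adjD hadj
  obtain ⟨S, hS⟩ := h₂.exists_dSeparated hab hadj₂
  exact not_dSeparated_of_adjD hab hadj S ((h S a b).2 hS)

theorem adjD_iff (h : MarkovEquivalent E₁ E₂) (h₁ : Acyclic E₁) (h₂ : Acyclic E₂)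
    (a b : V) : adjD E₁ a b ↔ adjD E₂ a b :=
  ⟨h.adjD_of_adjD h₁ h₂, h.symm.adjD_of_adjD h₂ h₁⟩

theorem vStructD_of_vStructD (h : MarkovEquivalent E₁ E₂) (h₁ : Acyclic E₁)
    (hskel : ∀ a b, adjD E₁ a b ↔ adjD E₂ a b) {a b c : V} (hv : vStructD E₁ a b c) :
    vStructD E₂ a b c := by
  obtain ⟨hab, hcb, hac, hnadj⟩ := hv
  have hab_ne := h₁.ne_of_rel hab
  have hbc_ne := (h₁.ne_of_rel hcb).symm
  obtain ⟨S, hS⟩ := h₁.exists_dSeparated hac hnadj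
  have hb := hS.notMem_of_collider hab_ne hbc_ne hac hab hcb
  obtain ⟨hab₂, hcb₂⟩ := ((h S a c).1 hS).collider_of_notMem hab_ne hbc_ne hac
    ((hskel a b).1 (.inl hab)) ((hskel b c).1 (.inr hcb)) hb
  exact ⟨hab₂, hcb₂, hac, fun h => hnadj ((hskel a c).2 h)⟩

end MarkovEquivalent

theorem stmt6_general {V : Type*} (E₁ E₂ : V → V → Prop)
    (h₁ : Acyclic E₁) (h₂ : Acyclic E₂)
    (hequiv : ∀ (S : Set V) (X Y : V), dSeparated E₁ S X Y ↔ dSeparated E₂ S X Y) :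
    (∀ a b, adjD E₁ a b ↔ adjD E₂ a b) ∧
    (∀ a b c, vStructD E₁ a b c ↔ vStructD E₂ a b c) := by
  have hmarkov : MarkovEquivalent E₁ E₂ := hequiv
  have hskel := hmarkov.adjD_iff h₁ h₂
  exact ⟨hskel, fun a b c => ⟨hmarkov.vStructD_of_vStructD h₁ hskel,
    hmarkov.symm.vStructD_of_vStructD h₂ fun a b => (hskel a b).symm⟩⟩

/-- two Markov equivalent DAGs (same d-separations) have the same skeleton
and the same v-structures. -/
theorem stmt6 {V : Type*} [Fintype V] (E₁ E₂ : V → V → Prop)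
    (h₁ : Acyclic E₁) (h₂ : Acyclic E₂)
    (hequiv : ∀ (S : Set V) (X Y : V), dSeparated E₁ S X Y ↔ dSeparated E₂ S X Y) :
    (∀ a b, adjD E₁ a b ↔ adjD E₂ a b) ∧
    (∀ a b c, vStructD E₁ a b c ↔ vStructD E₂ a b c) :=
  stmt6_general E₁ E₂ h₁ h₂ hequiv
end

section
/- Let M be a partially directed graph with edges a→b and b−c (undirected) where a and c are not adjacent, and suppose M admits an extension to a DAG with the same skeleton and no new v-structures. Then in every such DAG extension, the edge b−c is oriented as b→c (Meek's rule R1 soundness). -/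
/-- Meek's rule R1 soundness: if `a → b` and `b − c` in `M` with `a, c`
non-adjacent, then in every DAG extension of `M` with the same skeleton and no new
v-structures, the edge `b − c` is oriented `b → c`. -/
theorem stmt7 {V : Type*} (M : PDAG V) (a b c : V)
    (hab : M.dir a b) (hbc : M.undir b c) (hne : a ≠ c) (hac : ¬ M.adj a c)
    (E : V → V → Prop) (hE : ExtendsNoNewV M E) :
    E b c := by
  obtain ⟨hacy, hskel, hdir, hv⟩ := hE
  have hadj : adjD E b c := (hskel b c).mpr (Or.inr (Or.inr hbc))
  rcases hadj with h | h
  · exact h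
  · exfalso
    have hEab : E a b := hdir a b hab
    have hvE : vStructD E a b c := by
      refine ⟨hEab, h, hne, ?_⟩
      intro had
      exact hac ((hskel a c).mp had)
    have := hv a b c hvE
    exact M.disj c b (M.undir_symm b c hbc) this.2.1
end

section
/- Let G* be an MPDAG with B-components over vertex sets V₁,…,Vₖ. For every DAG G ∈ [G*] and every i, the induced subgraph of G over Vᵢ belongs to the restricted equivalence class of the i-th B-component. -/
/-! Restricting a DAG to a vertex set `W` commutes with everything `Represents` checks:
an edge, an adjacency or a v-structure of the restriction is one of the whole graph with all
its vertices in `W`, and the same holds for the induced sub-PDAG. So every DAG represented by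
`G` restricts to a DAG represented by `G.induce W`. -/

def restrictRel {V : Type*} (W : Set V) (E : V → V → Prop) (a b : V) : Prop :=
  a ∈ W ∧ b ∈ W ∧ E a b

section Restrict

variable {V : Type*} {W : Set V} {E : V → V → Prop} {a b c : V}

theorem Acyclic.mono {F : V → V → Prop} (hE : Acyclic E) (hFE : ∀ a b, F a b → E a b) :
    Acyclic F :=
  fun x hx => hE x (Relation.TransGen.mono hFE x x hx)

theorem Acyclic.restrictRel (hE : Acyclic E) : Acyclic (restrictRel W E) :=
  hE.mono fun _ _ h => h.2.2

theorem adjD_restrictRel_iff : adjD (restrictRel W E) a b ↔ a ∈ W ∧ b ∈ W ∧ adjD E a b := by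
  unfold adjD restrictRel
  tauto

theorem vStructD_restrictRel_iff :
    vStructD (restrictRel W E) a b c ↔ a ∈ W ∧ b ∈ W ∧ c ∈ W ∧ vStructD E a b c := by
  unfold vStructD
  rw [adjD_restrictRel_iff]
  unfold restrictRel
  tauto

end Restrict

namespace PDAG

variable {V : Type*} {G : PDAG V} {W : Set V} {E : V → V → Prop} {a b c : V}

theorem induce_adj_iff : (G.induce W).adj a b ↔ a ∈ W ∧ b ∈ W ∧ G.adj a b := by
  unfold adj induce
  tauto

theorem induce_vStruct_iff :
    (G.induce W).vStruct a b c ↔ a ∈ W ∧ b ∈ W ∧ c ∈ W ∧ G.vStruct a b c := by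
  unfold vStruct
  rw [induce_adj_iff]
  unfold induce
  tauto

theorem Represents.induce (hE : G.Represents E) (W : Set V) :
    (G.induce W).Represents (restrictRel W E) := by
  obtain ⟨hacyc, hskel, hdir, hvs⟩ := hE
  refine ⟨hacyc.restrictRel, fun a b => ?_, fun a b h => ⟨h.1, h.2.1, hdir a b h.2.2⟩,
    fun a b c => ?_⟩
  · rw [adjD_restrictRel_iff, induce_adj_iff, hskel]
  · rw [vStructD_restrictRel_iff, induce_vStruct_iff, hvs]

end PDAG

theorem stmt14_general {V : Type*} {ι : Type*} (G : PDAG V)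
    (W : ι → Set V)
    (E : V → V → Prop) (hE : G.Represents E) (i : ι) :
    (G.induce (W i)).Represents (fun a b => a ∈ W i ∧ b ∈ W i ∧ E a b) :=
  PDAG.Represents.induce hE (W i)

/-- for every DAG `E ∈ [G*]` and every B-component of `G*` with vertex
set `W i`, the induced subgraph of `E` over `W i` belongs to the restricted equivalence
class of that B-component. -/
theorem stmt14 {V : Type*} {ι : Type*} (G : PDAG V) (hG : G.IsMPDAG)
    (W : ι → Set V) (hcomp : ∀ i, IsBComponent G (W i))
    (hpart : ∀ v, ∃! i, v ∈ W i)
    (E : V → V → Prop) (hE : G.Represents E) (i : ι) :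
    (G.induce (W i)).Represents (fun a b => a ∈ W i ∧ b ∈ W i ∧ E a b) :=
  stmt14_general G W E hE i
end

section
/- Let G*₁ be an MPDAG and B₁₁, B₁₂ two distinct B-components over vertex sets V₁, V₂. Let X−Y be an undirected edge in B₁₂ and let G*₂ be the MPDAG representing the DAGs of [G*₁] with the additional constraint X→Y. Then for every DAG G₁ ∈ [G*₁] there exists G₂ ∈ [G*₂] such that the induced subgraphs of G₁ and G₂ over V₁ coincide. -/
section AuxStmt15

variable {V : Type*} {G1 : PDAG V}

/-- Reflexive-transitive closure of a symmetric relation is symmetric. -/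
lemma rtg_symm_aux {r : V → V → Prop} (hs : ∀ a b, r a b → r b a) {u v : V}
    (h : Relation.ReflTransGen r u v) : Relation.ReflTransGen r v u := by
  induction h with
  | refl => exact Relation.ReflTransGen.refl
  | tail _ h2 ih => exact Relation.ReflTransGen.head (hs _ _ h2) ih

/-- An edge of a represented DAG that is not undirected in `G1` must follow the
direction of `G1`. -/
lemma noUndir_aux {E : V → V → Prop} (hE : G1.Represents E) {u v : V}
    (h : E u v) (hnu : ¬ G1.undir u v) : G1.dir u v := by
  obtain ⟨hac, hsk, hd, hv⟩ := hE
  have hadj : G1.adj u v := (hsk u v).mp (Or.inl h)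
  unfold PDAG.adj at hadj
  rcases hadj with h2 | h2 | h2
  · exact h2
  · exact absurd ((Relation.TransGen.single h).tail (hd _ _ h2)) (hac u)
  · exact absurd h2 hnu

/-- Meek-style lemma: a directed edge into a vertex propagates along undirected
edges, absent an undirected connection. -/
lemma lemA_aux (hG1 : G1.IsMPDAG) {w p p' : V}
    (hwp : G1.dir w p) (hpp' : G1.undir p p') (hnu : ¬ G1.undir w p') :
    G1.dir w p' := by
  obtain ⟨-, hcomp, -⟩ := hG1
  have hwp' : w ≠ p' := by
    rintro rfl
    exact G1.disj _ _ (G1.undir_symm _ _ hpp') hwp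
  have hadj : G1.adj w p' := by
    by_contra hnadj
    have hall : ∀ E, G1.Represents E → E p p' := by
      intro E hE
      obtain ⟨hac, hsk, hd, hv⟩ := hE
      have hadjpp : adjD E p p' := (hsk p p').mpr (Or.inr (Or.inr hpp'))
      unfold adjD at hadjpp
      rcases hadjpp with h | h
      · exact h
      · exfalso
        have hvs : vStructD E w p p' :=
          ⟨hd _ _ hwp, h, hwp', fun hadj2 => hnadj ((hsk w p').mp hadj2)⟩
        have := ((hv w p p').mp hvs)
        unfold PDAG.vStruct at this
        exact G1.disj _ _ (G1.undir_symm _ _ hpp') this.2.1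
    exact G1.disj _ _ hpp'
      ((hcomp p p').mpr ⟨Or.inr (Or.inr hpp'), hall⟩)
  unfold PDAG.adj at hadj
  rcases hadj with h | h | h
  · exact h
  · exfalso
    have hall : ∀ E, G1.Represents E → E p' p := by
      intro E hE
      obtain ⟨hac, hsk, hd, hv⟩ := hE
      have hadjpp : adjD E p p' := (hsk p p').mpr (Or.inr (Or.inr hpp'))
      unfold adjD at hadjpp
      rcases hadjpp with h2 | h2
      · exact absurd (((Relation.TransGen.single h2).tail (hd _ _ h)).tail (hd _ _ hwp))
          (hac p)
      · exact h2
    exact G1.disj _ _ (G1.undir_symm _ _ hpp')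
      ((hcomp p' p).mpr ⟨Or.inr (Or.inr (G1.undir_symm _ _ hpp')), hall⟩)
  · exact absurd h hnu

end AuxStmt15

/-- orienting an undirected edge `X − Y` inside one B-component of an
MPDAG `G*₁` (giving the MPDAG `G*₂` of the restricted class) does not constrain the
orientation over any other B-component `V₁`. -/
theorem stmt15 {V : Type*} (G1 G2 : PDAG V) (hG1 : G1.IsMPDAG)
    (V1 V2 : Set V) (h1 : IsBComponent G1 V1) (h2 : IsBComponent G1 V2) (hne : V1 ≠ V2)
    (X Y : V) (hX : X ∈ V2) (hY : Y ∈ V2) (hXY : G1.undir X Y)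
    (hG2 : ∀ E, G2.Represents E ↔ (G1.Represents E ∧ E X Y))
    (hG2m : G2.IsMPDAG)
    (E1 : V → V → Prop) (hE1 : G1.Represents E1) :
    ∃ E2, G2.Represents E2 ∧ ∀ a b, a ∈ V1 → b ∈ V1 → (E2 a b ↔ E1 a b) := by
  classical
  -- pick some DAG represented by G2
  obtain ⟨E', hE'G2⟩ := hG2m.1
  obtain ⟨hE'rep, hE'XY⟩ := (hG2 E').mp hE'G2
  have haE' := hE'rep.1
  have hskel' := hE'rep.2.1
  have hdir1' := hE'rep.2.2.1
  have hv' := hE'rep.2.2.2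
  have haE1 := hE1.1
  have hskel1 := hE1.2.1
  have hdir1 := hE1.2.2.1
  have hv1 := hE1.2.2.2
  obtain ⟨a1, ha1⟩ := h1
  have memV1 : ∀ {u}, u ∈ V1 ↔ Relation.ReflTransGen G1.undir a1 u := by
    intro u; rw [ha1]; exact Iff.rfl
  have clos : ∀ {u v}, u ∈ V1 → G1.undir u v → v ∈ V1 := by
    intro u v hu huv
    rw [memV1] at hu ⊢
    exact hu.tail huv
  -- X is not in V1
  have hXV1 : X ∉ V1 := by
    intro hXV
    apply hne
    obtain ⟨a2, ha2⟩ := h2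
    have hX2 : Relation.ReflTransGen G1.undir a2 X := by rw [ha2] at hX; exact hX
    have hX1 : Relation.ReflTransGen G1.undir a1 X := memV1.mp hXV
    ext b
    rw [ha1, ha2]
    simp only [Set.mem_setOf_eq]
    constructor
    · intro h
      exact (hX2.trans (rtg_symm_aux G1.undir_symm hX1)).trans h
    · intro h
      exact (hX1.trans (rtg_symm_aux G1.undir_symm hX2)).trans h
  -- the patched orientation
  set E2 : V → V → Prop :=
    fun u v => (u ∈ V1 ∧ v ∈ V1 ∧ E1 u v) ∨ (¬(u ∈ V1 ∧ v ∈ V1) ∧ E' u v) with hE2def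
  have hIn : ∀ {u b : V}, E2 u b → b ∈ V1 → E1 u b := by
    rintro u b (⟨hu, hb, h⟩ | ⟨hn, h⟩) hbV
    · exact h
    · have huV : u ∉ V1 := fun hu => hn ⟨hu, hbV⟩
      have hnu : ¬ G1.undir u b := by
        intro hu
        exact huV (clos hbV (G1.undir_symm _ _ hu))
      exact hdir1 _ _ (noUndir_aux hE'rep h hnu)
  have hOut : ∀ {u b : V}, E2 u b → b ∉ V1 → E' u b := by
    rintro u b (⟨hu, hb, h⟩ | ⟨hn, h⟩) hbV
    · exact absurd hb hbV
    · exact h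
  have e2E' : ∀ {u v : V}, E2 u v → u ∉ V1 → E' u v := by
    rintro u v (⟨hu, hv, h⟩ | ⟨hn, h⟩) huV
    · exact absurd hu huV
    · exact h
  have hdir2 : ∀ a b, G1.dir a b → E2 a b := by
    intro a b h
    by_cases hab : a ∈ V1 ∧ b ∈ V1
    · exact Or.inl ⟨hab.1, hab.2, hdir1 _ _ h⟩
    · exact Or.inr ⟨hab, hdir1' _ _ h⟩
  -- directed edges from outside a B-component point at the whole component
  have lemB : ∀ {w p q : V}, w ∉ V1 → p ∈ V1 → G1.dir w p → q ∈ V1 → G1.dir w q := by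
    intro w p q hw hp hwp hq
    have hap : Relation.ReflTransGen G1.undir a1 p := memV1.mp hp
    have haq : Relation.ReflTransGen G1.undir a1 q := memV1.mp hq
    have hpq : Relation.ReflTransGen G1.undir p q :=
      (rtg_symm_aux G1.undir_symm hap).trans haq
    have key : ∀ {r : V}, Relation.ReflTransGen G1.undir p r → G1.dir w r := by
      intro r hr
      induction hr with
      | refl => exact hwp
      | @tail b r hpb hbr ih =>
        refine lemA_aux hG1 ih hbr ?_
        intro hu
        exact hw (memV1.mpr (((hap.trans hpb).tail hbr).tail (G1.undir_symm _ _ hu)))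
    exact key hpq
  -- skeleton of E2
  have hskel2 : ∀ a b, adjD E2 a b ↔ G1.adj a b := by
    intro a b
    unfold adjD
    by_cases h : a ∈ V1 ∧ b ∈ V1
    · constructor
      · rintro (h2 | h2)
        · exact (hskel1 a b).mp (Or.inl (hIn h2 h.2))
        · exact (hskel1 a b).mp (Or.inr (hIn h2 h.1))
      · intro h2
        have := (hskel1 a b).mpr h2
        unfold adjD at this
        rcases this with h3 | h3
        · exact Or.inl (Or.inl ⟨h.1, h.2, h3⟩)
        · exact Or.inr (Or.inl ⟨h.2, h.1, h3⟩)
    · have h' : ¬ (b ∈ V1 ∧ a ∈ V1) := fun hc => h ⟨hc.2, hc.1⟩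
      constructor
      · rintro (h2 | h2)
        · rcases h2 with ⟨hu, hv, _⟩ | ⟨_, h3⟩
          · exact absurd ⟨hu, hv⟩ h
          · exact (hskel' a b).mp (Or.inl h3)
        · rcases h2 with ⟨hu, hv, _⟩ | ⟨_, h3⟩
          · exact absurd ⟨hv, hu⟩ h
          · exact (hskel' a b).mp (Or.inr h3)
      · intro h2
        have := (hskel' a b).mpr h2
        unfold adjD at this
        rcases this with h3 | h3
        · exact Or.inl (Or.inr ⟨h, h3⟩)
        · exact Or.inr (Or.inr ⟨h', h3⟩)
  -- main acyclicity claims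
  have claimC : ∀ x, x ∈ V1 → ∀ y, Relation.TransGen E2 x y →
      (y ∈ V1 → Relation.TransGen E1 x y ∨
        ∃ q w, q ∈ V1 ∧ w ∉ V1 ∧ Relation.TransGen E' q w ∧ G1.dir w y) ∧
      (y ∉ V1 → ∃ q, q ∈ V1 ∧ Relation.TransGen E' q y) := by
    intro x hxV y hT
    induction hT with
    | @single y h =>
      constructor
      · intro hyV
        exact Or.inl (Relation.TransGen.single (hIn h hyV))
      · intro hyV
        exact ⟨x, hxV, Relation.TransGen.single (hOut h hyV)⟩
    | @tail b c hab hbc ih =>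
      constructor
      · intro hcV
        by_cases hbV : b ∈ V1
        · rcases ih.1 hbV with h1 | ⟨q, w, hq, hw, hqw, hwb⟩
          · exact Or.inl (h1.tail (hIn hbc hcV))
          · exact Or.inr ⟨q, w, hq, hw, hqw, lemB hw hbV hwb hcV⟩
        · obtain ⟨q, hq, hqb⟩ := ih.2 hbV
          have hbc' : E' b c := e2E' hbc hbV
          have hbcd : G1.dir b c :=
            noUndir_aux hE'rep hbc' (fun hu => hbV (clos hcV (G1.undir_symm _ _ hu)))
          exact Or.inr ⟨q, b, hq, hbV, hqb, hbcd⟩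
      · intro hcV
        by_cases hbV : b ∈ V1
        · rcases ih.1 hbV with h1 | ⟨q, w, hq, hw, hqw, hwb⟩
          · exact ⟨b, hbV, Relation.TransGen.single (hOut hbc hcV)⟩
          · exact ⟨q, hq, (hqw.tail (hdir1' w b hwb)).tail (hOut hbc hcV)⟩
        · obtain ⟨q, hq, hqb⟩ := ih.2 hbV
          exact ⟨q, hq, hqb.tail (e2E' hbc hbV)⟩
  have claimA : ∀ x, x ∉ V1 → ∀ y, Relation.TransGen E2 x y →
      (y ∉ V1 → Relation.TransGen E' x y) ∧
      (y ∈ V1 → ∃ w, w ∉ V1 ∧ Relation.ReflTransGen E' x w ∧ G1.dir w y) := by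
    intro x hxV y hT
    induction hT with
    | @single y h =>
      refine ⟨fun hyV => Relation.TransGen.single (e2E' h hxV), fun hyV => ?_⟩
      have h' : E' x y := e2E' h hxV
      exact ⟨x, hxV, Relation.ReflTransGen.refl,
        noUndir_aux hE'rep h' (fun hu => hxV (clos hyV (G1.undir_symm _ _ hu)))⟩
    | @tail b c hab hbc ih =>
      by_cases hbV : b ∈ V1
      · obtain ⟨w, hw, hxw, hwb⟩ := ih.2 hbV
        constructor
        · intro hcV
          exact Relation.TransGen.tail' (hxw.tail (hdir1' w b hwb)) (hOut hbc hcV)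
        · intro hcV
          exact ⟨w, hw, hxw, lemB hw hbV hwb hcV⟩
      · have hT' := ih.1 hbV
        constructor
        · intro hcV
          exact hT'.tail (e2E' hbc hbV)
        · intro hcV
          have hbc' : E' b c := e2E' hbc hbV
          exact ⟨b, hbV, hT'.to_reflTransGen,
            noUndir_aux hE'rep hbc' (fun hu => hbV (clos hcV (G1.undir_symm _ _ hu)))⟩
  have hacyc2 : Acyclic E2 := by
    intro x hx
    by_cases hxV : x ∈ V1
    · rcases (claimC x hxV x hx).1 hxV with h | ⟨q, w, hq, hw, hqw, hwx⟩
      · exact haE1 x h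
      · exact haE' q (hqw.tail (hdir1' w q (lemB hw hxV hwx hq)))
    · exact haE' x ((claimA x hxV x hx).1 hxV)
  -- v-structures of E2
  have hv2 : ∀ a b c, vStructD E2 a b c ↔ G1.vStruct a b c := by
    intro a b c
    constructor
    · intro h
      obtain ⟨hab, hcb, hac, hnadj⟩ := h
      have hnadj1 : ¬ G1.adj a c := fun h2 => hnadj ((hskel2 a c).mpr h2)
      by_cases hb : b ∈ V1
      · exact (hv1 a b c).mp
          ⟨hIn hab hb, hIn hcb hb, hac, fun h2 => hnadj1 ((hskel1 a c).mp h2)⟩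
      · exact (hv' a b c).mp
          ⟨hOut hab hb, hOut hcb hb, hac, fun h2 => hnadj1 ((hskel' a c).mp h2)⟩
    · intro h
      unfold PDAG.vStruct at h
      obtain ⟨h1d, h2d, hne', hnadj⟩ := h
      exact ⟨hdir2 _ _ h1d, hdir2 _ _ h2d, hne',
        fun h2 => hnadj ((hskel2 a c).mp h2)⟩
  have hE2XY : E2 X Y := Or.inr ⟨fun hc => hXV1 hc.1, hE'XY⟩
  refine ⟨E2, (hG2 E2).mpr ⟨⟨hacyc2, hskel2, hdir2, hv2⟩, hE2XY⟩, ?_⟩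
  intro a b ha hb
  constructor
  · intro h
    exact hIn h hb
  · intro h
    exact Or.inl ⟨ha, hb, h⟩
end

section
/- Let p = ⟨V₁,…,Vₙ⟩ be a b-possibly causal path of definite status in an MPDAG M. If Vᵢ→Vᵢ₊₁ is a directed edge in M for some i, then the subpath p(Vᵢ,Vₙ) is a directed (causal) path in M. -/
/-- Perković et al., Lemma B.1: on a b-possibly causal path of definite
status in an MPDAG, once a directed edge `Vᵢ → Vᵢ₊₁` occurs, the rest of the path is
directed (causal) in the MPDAG. -/
theorem stmt17 {V : Type*} (M : PDAG V) (hM : M.IsMPDAG) (p : List V)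
    (hwalk : p.Chain' M.adj) (hnodup : p.Nodup)
    (hbpc : bPossiblyCausal M p) (hds : DefiniteStatus M p)
    (i : ℕ) (x y : V) (hx : p[i]? = some x) (hy : p[i+1]? = some y) (hdir : M.dir x y) :
    ∀ j a b, i ≤ j → p[j]? = some a → p[j+1]? = some b → M.dir a b := by
  intro j a b hij hja hjb
  induction j, hij using Nat.le_induction generalizing a b with
  | base =>
    rw [hx] at hja; rw [hy] at hjb
    cases hja; cases hjb; exact hdir
  | succ j hij ih =>
    have hjlt : j < p.length := by
      have h1 : j + 1 < p.length := (List.getElem?_eq_some_iff.mp hja).1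
      omega
    have hja0 : p[j]? = some p[j] := List.getElem?_eq_getElem hjlt
    have hd0 : M.dir p[j] a := ih _ _ hja0 hja
    rcases hds j p[j] a b hja0 hja hjb with ⟨_, hcb⟩ | hba | hbc | ⟨hu, _, _⟩
    · exact absurd hcb (hbpc (j+1) (j+2) a b (by omega) hja hjb)
    · exact absurd hd0 (M.dir_asymm _ _ hba)
    · exact hbc
    · exact absurd hd0 (M.disj _ _ hu)
end
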